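/- arXiv:2505.19891 — 2 statements merged into one kernel-verified Lean document; each statement's English description precedes it below -/
import Mathlib

section
/- Let X be a Banach space, and let [·]'_ε denote the set derivation associated with a collection 𝒜 of open subsets of X stable under dilations and translations: [C]'_ε = C \ ⋃{A ∈ 𝒜 : diam(A ∩ C) < ε}. Then for every ε ∈ (0,1], every λ ∈ (0,1), and the first derivation step, λ·[B_X]'_ε + (1−λ)·B_X ⊆ [B_X]'_{λε}, where B_X is the closed unit ball. -/
open scoped Pointwise
open Metric Set

/-
Let `z = λu + (1-λ)b` lie in some `A ∈ 𝒜`. The homothety `f x = λx + (1-λ)b` sends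
`u` to `z`, so `f⁻¹(A)`, a translate-and-dilate of `A`, is a member of `𝒜` containing `u`; hence
`diam (f⁻¹(A) ∩ B) ≥ ε`. By convexity of the ball `f` maps `f⁻¹(A) ∩ B` into `A ∩ B`, and it
multiplies distances by `λ`, so `diam (A ∩ B) ≥ λε`.
-/

section

variable {X : Type*} [SeminormedAddCommGroup X] [NormedSpace ℝ X]

/-- The paper's `[C]'_ε`, in its pointwise form. -/
def diamDerivation (𝒜 : Set (Set X)) (C : Set X) (ε : ℝ) : Set X :=
  {z ∈ C | ∀ A ∈ 𝒜, z ∈ A → ENNReal.ofReal ε ≤ ediam (A ∩ C)}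

theorem ofReal_mul_ediam_le_of_mapsTo {s t : Set X} {r : ℝ} (hr : 0 ≤ r) (c : X)
    (h : MapsTo (fun x => r • x + c) s t) : ENNReal.ofReal r * ediam s ≤ ediam t :=
  calc ENNReal.ofReal r * ediam s = ediam (r • s) := by
        rw [ediam_smul₀, Real.nnnorm_of_nonneg hr, ENNReal.smul_def, smul_eq_mul,
          ENNReal.ofReal, Real.toNNReal_of_nonneg hr]
    _ = ediam ((· + c) '' (r • s)) := ((isometry_add_right c).ediam_image _).symm
    _ ≤ ediam t := ediam_mono <| by
        rintro _ ⟨_, ⟨x, hx, rfl⟩, rfl⟩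
        exact h hx

theorem preimage_smul_add_mem {𝒜 : Set (Set X)}
    (htrans : ∀ A ∈ 𝒜, ∀ v : X, (fun x => x + v) '' A ∈ 𝒜)
    (hdil : ∀ A ∈ 𝒜, ∀ t : ℝ, 0 < t → t • A ∈ 𝒜) {A : Set X} (hA : A ∈ 𝒜)
    {r : ℝ} (hr : 0 < r) (c : X) : (fun x => r • x + c) ⁻¹' A ∈ 𝒜 := by
  convert hdil _ (htrans A hA (-c)) r⁻¹ (inv_pos.2 hr) using 1
  ext x
  simp [mem_smul_set_iff_inv_smul_mem₀ (inv_ne_zero hr.ne')]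

theorem smul_add_smul_mem_diamDerivation {𝒜 : Set (Set X)} {C : Set X} (hC : Convex ℝ C)
    (htrans : ∀ A ∈ 𝒜, ∀ v : X, (fun x => x + v) '' A ∈ 𝒜)
    (hdil : ∀ A ∈ 𝒜, ∀ t : ℝ, 0 < t → t • A ∈ 𝒜) {ε lam : ℝ} (hlam0 : 0 < lam)
    (hlam1 : lam ≤ 1) {u b : X} (hu : u ∈ diamDerivation 𝒜 C ε) (hb : b ∈ C) :
    lam • u + (1 - lam) • b ∈ diamDerivation 𝒜 C (lam * ε) := by
  have hconv : ∀ x ∈ C, lam • x + (1 - lam) • b ∈ C := fun x hx =>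
    hC hx hb hlam0.le (by linarith) (by ring)
  refine ⟨hconv u hu.1, fun A hA hz => ?_⟩
  set f : X → X := fun x => lam • x + (1 - lam) • b
  have hmaps : MapsTo f (f ⁻¹' A ∩ C) (A ∩ C) := fun x hx => ⟨hx.1, hconv x hx.2⟩
  calc ENNReal.ofReal (lam * ε) = ENNReal.ofReal lam * ENNReal.ofReal ε :=
        ENNReal.ofReal_mul hlam0.le
    _ ≤ ENNReal.ofReal lam * ediam (f ⁻¹' A ∩ C) := by
        gcongr
        exact hu.2 _ (preimage_smul_add_mem htrans hdil hA hlam0 _) hz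
    _ ≤ ediam (A ∩ C) := ofReal_mul_ediam_le_of_mapsTo hlam0.le _ hmaps

end

theorem convex_combination_derivation_general
    {X : Type*} [NormedAddCommGroup X] [NormedSpace ℝ X]
    (𝒜 : Set (Set X))
    (htrans : ∀ A ∈ 𝒜, ∀ v : X, (fun x => x + v) '' A ∈ 𝒜)
    (hdil : ∀ A ∈ 𝒜, ∀ t : ℝ, 0 < t → t • A ∈ 𝒜)
    (ε lam : ℝ) (hlam0 : 0 < lam) (hlam1 : lam < 1) :
    ∀ u ∈ {z ∈ Metric.closedBall (0 : X) 1 | ∀ A ∈ 𝒜, z ∈ A →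
        ENNReal.ofReal ε ≤ EMetric.diam (A ∩ Metric.closedBall (0 : X) 1)},
      ∀ b ∈ Metric.closedBall (0 : X) 1,
        lam • u + (1 - lam) • b ∈
          {z ∈ Metric.closedBall (0 : X) 1 | ∀ A ∈ 𝒜, z ∈ A →
            ENNReal.ofReal (lam * ε) ≤ EMetric.diam (A ∩ Metric.closedBall (0 : X) 1)} :=
  fun _ hu _ hb =>
    smul_add_smul_mem_diamDerivation (convex_closedBall 0 1) htrans hdil hlam0 hlam1.le hu hb

/-- For a collection `𝒜` of open sets stable under translations and positive dilations,
the associated derivation of the unit ball satisfies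
`λ • [B_X]'_ε + (1-λ) • B_X ⊆ [B_X]'_{λε}` for `ε ∈ (0,1]`, `λ ∈ (0,1)`. -/
theorem convex_combination_derivation
    {X : Type*} [NormedAddCommGroup X] [NormedSpace ℝ X] [CompleteSpace X]
    (𝒜 : Set (Set X)) (hopen : ∀ A ∈ 𝒜, IsOpen A)
    (htrans : ∀ A ∈ 𝒜, ∀ v : X, (fun x => x + v) '' A ∈ 𝒜)
    (hdil : ∀ A ∈ 𝒜, ∀ t : ℝ, 0 < t → t • A ∈ 𝒜)
    (ε lam : ℝ) (hε0 : 0 < ε) (hε1 : ε ≤ 1) (hlam0 : 0 < lam) (hlam1 : lam < 1) :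
    ∀ u ∈ {z ∈ Metric.closedBall (0 : X) 1 | ∀ A ∈ 𝒜, z ∈ A →
        ENNReal.ofReal ε ≤ EMetric.diam (A ∩ Metric.closedBall (0 : X) 1)},
      ∀ b ∈ Metric.closedBall (0 : X) 1,
        lam • u + (1 - lam) • b ∈
          {z ∈ Metric.closedBall (0 : X) 1 | ∀ A ∈ 𝒜, z ∈ A →
            ENNReal.ofReal (lam * ε) ≤ EMetric.diam (A ∩ Metric.closedBall (0 : X) 1)} :=
  convex_combination_derivation_general 𝒜 htrans hdil ε lam hlam0 hlam1
end

section
/- Let (M, d) be a δ-separated metric space (d(x,y) ≥ δ for all x ≠ y), and suppose h : M → c₀ satisfies λ·d(x,y) ≤ ‖h(x) − h(y)‖_∞ ≤ 2λ·d(x,y) for all x, y, where λ > 1/δ. Let g : c₀ → c₀ round each coordinate to a nearest integer, so that ‖z − g(z)‖_∞ ≤ 1/2 for all z. Then f = g ∘ h maps M into the integer grid ℤ_{c₀} and satisfies (λ − 1/δ)·d(x,y) ≤ ‖f(x) − f(y)‖_∞ ≤ (2λ + 1/δ)·d(x,y) for all x, y ∈ M. -/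
open scoped ZeroAtInfty

/-- Rounding a good embedding `h : M → c₀` of a `δ`-separated metric space coordinatewise
to integers yields a map into the integer grid `ℤ_{c₀}` with distortion bounds
`(λ - 1/δ) d(x,y) ≤ ‖f(x) - f(y)‖ ≤ (2λ + 1/δ) d(x,y)`. -/
theorem rounding_embedding_into_grid
    {M : Type*} [MetricSpace M] (δ : ℝ) (hδ : 0 < δ)
    (hsep : ∀ x y : M, x ≠ y → δ ≤ dist x y)
    (lam : ℝ) (hlam : 1 / δ < lam)
    (h : M → C₀(ℕ, ℝ))
    (hlb : ∀ x y : M, lam * dist x y ≤ ‖h x - h y‖)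
    (hub : ∀ x y : M, ‖h x - h y‖ ≤ 2 * lam * dist x y)
    (g : C₀(ℕ, ℝ) → C₀(ℕ, ℝ))
    (hint : ∀ (z : C₀(ℕ, ℝ)) (n : ℕ), ∃ m : ℤ, g z n = (m : ℝ))
    (hclose : ∀ z : C₀(ℕ, ℝ), ‖z - g z‖ ≤ 1 / 2) :
    (∀ x : M, (∀ n : ℕ, ∃ m : ℤ, g (h x) n = (m : ℝ)) ∧
      (Function.support fun n => g (h x) n).Finite) ∧
    (∀ x y : M, (lam - 1 / δ) * dist x y ≤ ‖g (h x) - g (h y)‖ ∧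
      ‖g (h x) - g (h y)‖ ≤ (2 * lam + 1 / δ) * dist x y) := by
  constructor
  · intro x
    refine ⟨hint _, ?_⟩
    have htend : Filter.Tendsto (g (h x)) (Filter.cocompact ℕ) (nhds 0) :=
      ZeroAtInftyContinuousMapClass.zero_at_infty (g (h x))
    rw [Filter.cocompact_eq_cofinite] at htend
    have hev : ∀ᶠ n in Filter.cofinite, |g (h x) n| < 1 := by
      have := Metric.tendsto_nhds.mp htend 1 one_pos
      simpa [Real.dist_eq] using this
    rw [Filter.eventually_cofinite] at hev
    refine hev.subset ?_
    intro n hn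
    simp only [Set.mem_setOf_eq, not_lt]
    obtain ⟨m, hm⟩ := hint (h x) n
    have hm0 : m ≠ 0 := by
      intro h0
      rw [Function.mem_support] at hn
      exact hn (by rw [hm, h0]; simp)
    rw [hm]
    exact_mod_cast Int.one_le_abs (by exact_mod_cast hm0)
  · intro x y
    by_cases hxy : x = y
    · subst hxy; simp
    have hd : δ ≤ dist x y := hsep x y hxy
    have hd0 : 0 < dist x y := lt_of_lt_of_le hδ hd
    have h1 : (1 : ℝ) ≤ dist x y / δ := (one_le_div hδ).mpr hd
    have key : ‖(h x - h y) - (g (h x) - g (h y))‖ ≤ 1 := by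
      have : (h x - h y) - (g (h x) - g (h y)) = (h x - g (h x)) - (h y - g (h y)) := by abel
      rw [this]
      calc ‖(h x - g (h x)) - (h y - g (h y))‖ ≤ ‖h x - g (h x)‖ + ‖h y - g (h y)‖ :=
            norm_sub_le _ _
        _ ≤ 1 / 2 + 1 / 2 := add_le_add (hclose _) (hclose _)
        _ = 1 := by norm_num
    have hge : ‖h x - h y‖ - 1 ≤ ‖g (h x) - g (h y)‖ := by
      have := norm_sub_norm_le (h x - h y) (g (h x) - g (h y))
      linarith [key]
    have hle : ‖g (h x) - g (h y)‖ ≤ ‖h x - h y‖ + 1 := by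
      have := norm_sub_norm_le (g (h x) - g (h y)) (h x - h y)
      have h2 : ‖(g (h x) - g (h y)) - (h x - h y)‖ ≤ 1 := by
        rw [← norm_neg]; simpa [neg_sub] using key
      linarith
    have hdd : 1 ≤ dist x y / δ := h1
    have hdiv : (1 / δ) * dist x y = dist x y / δ := by ring
    constructor
    · have : (lam - 1 / δ) * dist x y = lam * dist x y - (1/δ) * dist x y := by ring
      rw [this]
      have : 1 ≤ (1/δ) * dist x y := by rw [hdiv]; exact hdd
      linarith [hlb x y]
    · have : (2 * lam + 1 / δ) * dist x y = 2 * lam * dist x y + (1/δ) * dist x y := by ring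
      rw [this]
      have : 1 ≤ (1/δ) * dist x y := by rw [hdiv]; exact hdd
      linarith [hub x y]
end
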